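/- Let α_1 = (−6,−3,0), α_2 = (−1,1,0), α_3 = (1,2,2), α_4 = (6,0,−2) in ℝ³ with the standard inner product. Then α_1 + α_2 + α_3 + α_4 = 0; every three of the four vectors are linearly independent, so C = {α_1, α_2, α_3, α_4} is a circuit with dependence coefficients c_1 = c_2 = c_3 = c_4 = 1; and both the acuteness graph Γ_C (which has exactly the edges {1,2}, {2,3}, {3,4}) and the obtuseness graph (which has exactly the edges {1,3}, {1,4}, {2,4}) are connected. In particular, a circuit of vectors in a Euclidean space of dimension ≥ 3 can have connected acuteness graph. -/

import Mathlib

open scoped RealInnerProductSpace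

/-- A circuit: a finite linearly dependent set of vectors, every proper subset of which is
linearly independent. -/
def IsCircuit {V' : Type*} [AddCommGroup V'] [Module ℝ V'] (C : Set V') : Prop :=
  C.Finite ∧ ¬ LinearIndependent ℝ (fun x : C => (x : V')) ∧
    ∀ D : Set V', D ⊂ C → LinearIndependent ℝ (fun x : D => (x : V'))

/-- The four vectors `α₁ = (−6,−3,0)`, `α₂ = (−1,1,0)`, `α₃ = (1,2,2)`, `α₄ = (6,0,−2)`
in `ℝ³`. -/
noncomputable def vv : Fin 4 → EuclideanSpace ℝ (Fin 3) :=
  ![(WithLp.equiv 2 (Fin 3 → ℝ)).symm ![-6, -3, 0],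
    (WithLp.equiv 2 (Fin 3 → ℝ)).symm ![-1, 1, 0],
    (WithLp.equiv 2 (Fin 3 → ℝ)).symm ![1, 2, 2],
    (WithLp.equiv 2 (Fin 3 → ℝ)).symm ![6, 0, -2]]

/-! The four vectors sum to zero and any three of them are independent. For a family indexed
by `Fin (n + 1)` with these two properties the whole range is dependent, while every proper subset
of the range lies in the range of one of the independent subfamilies, so the range is a circuit
with all coefficients `1`. The signs of the Gram matrix are computed explicitly: the acuteness
graph is the path `1–2–3–4`, and the obtuseness graph, its complement, is the path `2–4–1–3`. -/

theorem not_linearIndependent_of_sum_eq_zero {R V ι : Type*} [Ring R] [Nontrivial R]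
    [AddCommGroup V] [Module R V] [Fintype ι] [Nonempty ι] {v : ι → V}
    (h : ∑ i, v i = 0) : ¬ LinearIndependent R v :=
  Fintype.not_linearIndependent_iff.mpr ⟨1, by simpa using h, Classical.arbitrary ι, one_ne_zero⟩

theorem linearIndepOn_id_of_ssubset_range {R V : Type*} [Semiring R] [AddCommMonoid V]
    [Module R V] {n : ℕ} {v : Fin (n + 1) → V}
    (hv : ∀ i : Fin (n + 1), LinearIndependent R (v ∘ i.succAbove)) {S : Set V}
    (hS : S ⊂ Set.range v) :
    LinearIndepOn R id S := by
  obtain ⟨-, ⟨i, rfl⟩, hi⟩ := Set.exists_of_ssubset hS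
  refine (hv i).linearIndepOn_id.mono ?_
  rintro _ hy
  obtain ⟨j, rfl⟩ := hS.subset hy
  obtain ⟨k, rfl⟩ := Fin.exists_succAbove_eq (show j ≠ i by rintro rfl; exact hi hy)
  exact ⟨k, rfl⟩

theorem isCircuit_range_of_sum_eq_zero {V : Type*} [AddCommGroup V] [Module ℝ V] {n : ℕ}
    {v : Fin (n + 1) → V} (hinj : Function.Injective v) (hsum : ∑ i, v i = 0)
    (hv : ∀ i : Fin (n + 1), LinearIndependent ℝ (v ∘ i.succAbove)) : IsCircuit (Set.range v) :=
  ⟨Set.finite_range v,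
    fun h =>
      not_linearIndependent_of_sum_eq_zero hsum ((linearIndepOn_id_range_iff hinj).mp h),
    fun _ => linearIndepOn_id_of_ssubset_range hv⟩

theorem SimpleGraph.connected_of_adj_castSucc_succ {V : Type*} {G : SimpleGraph V} {n : ℕ}
    (f : Fin (n + 1) → V) (hf : Function.Surjective f)
    (hadj : ∀ i : Fin n, G.Adj (f i.castSucc) (f i.succ)) : G.Connected := by
  have : Nonempty V := ⟨f 0⟩
  have hreach : ∀ i, G.Reachable (f 0) (f i) := by
    refine Fin.induction (by rfl) fun i hi => hi.trans (hadj i).reachable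
  refine ⟨fun u w => ?_⟩
  obtain ⟨i, rfl⟩ := hf u
  obtain ⟨j, rfl⟩ := hf w
  exact (hreach i).symm.trans (hreach j)

lemma inner_vv (i j : Fin 4) : ⟪vv i, vv j⟫ =
    !![45, 3, -12, -36; 3, 2, 1, -6; -12, 1, 9, 2; -36, -6, 2, 40] i j := by
  fin_cases i <;> fin_cases j <;>
    simp [vv, PiLp.inner_apply, Fin.sum_univ_three, EuclideanSpace.real_norm_sq_eq] <;> norm_num

lemma sum_vv : vv 0 + vv 1 + vv 2 + vv 3 = 0 := by
  ext k
  fin_cases k <;> simp [vv]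
  norm_num

-- the squared norms `45, 2, 9, 40` are distinct
lemma injective_vv : Function.Injective vv := by
  intro i j h
  have hnorm : ⟪vv i, vv i⟫ = ⟪vv j, vv j⟫ := by rw [h]
  rw [inner_vv, inner_vv] at hnorm
  fin_cases i <;> fin_cases j <;> first | rfl | norm_num at hnorm

lemma linearIndependent_vv_comp_succAbove (i : Fin 4) :
    LinearIndependent ℝ (vv ∘ i.succAbove) := by
  rw [Fintype.linearIndependent_iff]
  intro g hg
  have hcoord (k : Fin 3) := congrArg (· k) hg
  have h0 := hcoord 0
  have h1 := hcoord 1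
  have h2 := hcoord 2
  fin_cases i <;> simp [Fin.sum_univ_three, vv, Fin.succAbove] at h0 h1 h2 <;>
    intro j <;> fin_cases j <;> simp <;> linarith

lemma acute_iff (i j : Fin 4) : (i ≠ j ∧ 0 < ⟪vv i, vv j⟫) ↔
    (i, j) ∈ ({(0, 1), (1, 0), (1, 2), (2, 1), (2, 3), (3, 2)} : Set (Fin 4 × Fin 4)) := by
  fin_cases i <;> fin_cases j <;> simp [inner_vv, Prod.ext_iff, Fin.ext_iff]

lemma obtuse_iff (i j : Fin 4) : (i ≠ j ∧ ⟪vv i, vv j⟫ < 0) ↔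
    (i, j) ∈ ({(0, 2), (2, 0), (0, 3), (3, 0), (1, 3), (3, 1)} : Set (Fin 4 × Fin 4)) := by
  fin_cases i <;> fin_cases j <;> simp [inner_vv, Prod.ext_iff, Fin.ext_iff]

/-- The four vectors sum to zero; they form a circuit (with dependence coefficients all `1`);
the acuteness graph has exactly the edges `{1,2}, {2,3}, {3,4}`, the obtuseness graph has
exactly the edges `{1,3}, {1,4}, {2,4}`, and both graphs are connected.  In particular a
circuit in a Euclidean space of dimension `≥ 3` can have connected acuteness graph. -/
theorem stmt18 :
    (vv 0 + vv 1 + vv 2 + vv 3 = 0) ∧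
    Function.Injective vv ∧
    (∀ S : Set (EuclideanSpace ℝ (Fin 3)), S ⊂ Set.range vv →
      LinearIndependent ℝ (fun x : S => (x : EuclideanSpace ℝ (Fin 3)))) ∧
    IsCircuit (Set.range vv) ∧
    (∀ i j : Fin 4, (i ≠ j ∧ 0 < ⟪vv i, vv j⟫) ↔
      (i, j) ∈ ({(0, 1), (1, 0), (1, 2), (2, 1), (2, 3), (3, 2)} : Set (Fin 4 × Fin 4))) ∧
    (∀ i j : Fin 4, (i ≠ j ∧ ⟪vv i, vv j⟫ < 0) ↔
      (i, j) ∈ ({(0, 2), (2, 0), (0, 3), (3, 0), (1, 3), (3, 1)} : Set (Fin 4 × Fin 4))) ∧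
    (SimpleGraph.fromRel fun i j : Fin 4 => 0 < ⟪vv i, vv j⟫).Connected ∧
    (SimpleGraph.fromRel fun i j : Fin 4 => ⟪vv i, vv j⟫ < 0).Connected := by
  have hsum : ∑ i, vv i = 0 := by simpa [Fin.sum_univ_four] using sum_vv
  refine ⟨sum_vv, injective_vv,
    fun _ => linearIndepOn_id_of_ssubset_range linearIndependent_vv_comp_succAbove,
    isCircuit_range_of_sum_eq_zero injective_vv hsum linearIndependent_vv_comp_succAbove,
    acute_iff, obtuse_iff, ?_, ?_⟩
  · refine SimpleGraph.connected_of_adj_castSucc_succ id Function.surjective_id fun i => ?_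
    have hij := (acute_iff i.castSucc i.succ).mpr (by fin_cases i <;> simp)
    exact SimpleGraph.fromRel_adj _ _ _ |>.mpr ⟨hij.1, .inl hij.2⟩
  · let path : Fin 4 → Fin 4 := ![1, 3, 0, 2]
    refine SimpleGraph.connected_of_adj_castSucc_succ path (by decide) fun i => ?_
    have hij := (obtuse_iff (path i.castSucc) (path i.succ)).mpr (by fin_cases i <;> simp [path])
    exact SimpleGraph.fromRel_adj _ _ _ |>.mpr ⟨hij.1, .inl hij.2⟩
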